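/- arXiv:1801.08808 — 3 statements merged into one kernel-verified Lean document; each statement's English description precedes it below -/
import Mathlib

section
/- (Bailey–Cavallo redistribution index, single object) For the single-object setting with n ≥ 3 agents and rebates r_i = v_{-i,2}/n, the total rebate equals (2 v_3 + (n−2) v_2)/n, and the worst-case fraction of the VCG surplus redistributed, inf over profiles with v_2 > 0 of (Σ_i r_i)/v_2, equals (n−2)/n. -/
lemma bc_sum (n : ℕ) (hn : 3 ≤ n) (a b : ℝ) :
    ∑ i ∈ Finset.Icc 1 n, (if i ≤ 2 then a else b) / n
      = (2 * a + (n - 2) * b) / n := by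
  have h12 : (1:ℕ) ≤ 2 := by norm_num
  have h2n : (2:ℕ) ≤ n := by omega
  have hsplit : Finset.Icc 1 n = Finset.Icc 1 2 ∪ Finset.Ioc 2 n := by
    ext i; simp [Finset.mem_Icc, Finset.mem_Ioc]; omega
  rw [hsplit, Finset.sum_union (by simp [Finset.disjoint_left]; omega)]
  have h1 : ∑ i ∈ Finset.Icc 1 2, (if i ≤ 2 then a else b) / n = 2 * (a / n) := by
    rw [show Finset.Icc 1 2 = {1, 2} from rfl]
    norm_num; ring
  have h2 : ∑ i ∈ Finset.Ioc 2 n, (if i ≤ 2 then a else b) / n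
      = (n - 2 : ℝ) * (b / n) := by
    rw [Finset.sum_congr rfl (fun i hi => by
      rw [if_neg (by simp [Finset.mem_Ioc] at hi; omega)]),
      Finset.sum_const, Nat.card_Ioc, nsmul_eq_mul]
    congr 1
    have : (2:ℕ) ≤ n := h2n
    push_cast [Nat.cast_sub h2n]
    ring
  rw [h1, h2]
  field_simp

lemma bc_mono (n : ℕ) (v : ℕ → ℝ) (h : ∀ i, 1 ≤ i → i < n → v (i + 1) ≤ v i)
    (i : ℕ) (hi : 1 ≤ i) : ∀ j, i ≤ j → j ≤ n → v j ≤ v i := by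
  intro j hij hjn
  induction j, hij using Nat.le_induction with
  | base => exact le_refl _
  | succ k hk ih =>
      exact le_trans (h k (hi.trans hk) (by omega)) (ih (by omega))

/-- Bailey–Cavallo redistribution index, single object:
with `n ≥ 3` agents and rebates `r i = v_{-i,2} / n` (so `r 1 = r 2 = v 3 / n` and
`r i = v 2 / n` for `i ≥ 3`), for every admissible sorted nonnegative profile the
total rebate equals `(2 * v 3 + (n - 2) * v 2) / n`, and the worst-case fraction of
the VCG surplus `v 2` that is redistributed — the infimum, over sorted nonnegative
profiles with `v 2 > 0`, of (total rebate)/`v 2` — equals `(n - 2) / n`. -/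
theorem bailey_cavallo_index
    (n : ℕ) (hn : 3 ≤ n) :
    (∀ v : ℕ → ℝ,
      (∀ i, 1 ≤ i → i < n → v (i + 1) ≤ v i) → v n ≥ 0 →
      ∑ i ∈ Finset.Icc 1 n, (if i ≤ 2 then v 3 else v 2) / n
        = (2 * v 3 + (n - 2) * v 2) / n) ∧
    sInf { x : ℝ | ∃ v : ℕ → ℝ,
        (∀ i, 1 ≤ i → i < n → v (i + 1) ≤ v i) ∧ v n ≥ 0 ∧ 0 < v 2 ∧
        x = (∑ i ∈ Finset.Icc 1 n, (if i ≤ 2 then v 3 else v 2) / n) / v 2 }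
      = (n - 2) / n := by
  have hn0 : (0:ℝ) < n := by positivity
  have hn2 : (0:ℝ) ≤ (n:ℝ) - 2 := by
    have : (3:ℝ) ≤ n := by exact_mod_cast hn
    linarith
  constructor
  · intro v _ _; exact bc_sum n hn _ _
  · apply csInf_eq_of_forall_ge_of_forall_gt_exists_lt
    · refine ⟨_, fun i => if i ≤ 2 then 1 else 0, ?_, ?_, ?_, rfl⟩
      · intro i hi hin
        dsimp only
        split_ifs with h1 h2
        · exact le_refl _
        · omega
        · norm_num
        · exact le_refl _
      · show (if n ≤ 2 then (1:ℝ) else 0) ≥ 0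
        split_ifs <;> norm_num
      · norm_num
    · rintro x ⟨v, hs, hvn, hv2, rfl⟩
      rw [bc_sum n hn]
      have hv3 : 0 ≤ v 3 := le_trans hvn (bc_mono n v hs 3 (by omega) n (by omega) le_rfl)
      rw [div_div, div_le_div_iff₀ hn0 (by positivity)]
      nlinarith [mul_nonneg hv3 hn0.le]
    · intro w hw
      set ε : ℝ := min 1 (n * (w - ((n:ℝ) - 2) / n) / 4) with hε
      have hwpos : 0 < w - ((n:ℝ) - 2) / n := by linarith
      have hε0 : 0 < ε := lt_min one_pos (by positivity)
      have hε1 : ε ≤ 1 := min_le_left _ _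
      refine ⟨_, ⟨fun i => if i ≤ 2 then 1 else ε, ?_, ?_, ?_, rfl⟩, ?_⟩
      · intro i hi hin
        dsimp only
        split_ifs with h1 h2
        · exact le_refl _
        · omega
        · exact hε1
        · exact le_refl _
      · show (if n ≤ 2 then (1:ℝ) else ε) ≥ 0
        split_ifs
        · norm_num
        · exact hε0.le
      · norm_num
      · have heq : ((fun i => if i ≤ 2 then (1:ℝ) else ε) 3) = ε := by norm_num
        have heq2 : ((fun i => if i ≤ 2 then (1:ℝ) else ε) 2) = 1 := by norm_num
        rw [bc_sum n hn, heq, heq2, div_one]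
        have h4 : ε ≤ n * (w - ((n:ℝ) - 2) / n) / 4 := min_le_right _ _
        rw [div_lt_iff₀ hn0]
        have hne : (n:ℝ) ≠ 0 := ne_of_gt hn0
        have hkey : (n:ℝ) * (w - ((n:ℝ)-2)/n) = w * n - (n - 2) := by
          field_simp
        nlinarith [hwpos, hn0]
end

section
/- No anonymous, deterministic, DSIC Groves redistribution mechanism can be strictly budget balanced in the single-object setting with n ≥ 2 agents: there is no function f: ℝ^{n-1} → ℝ such that Σ_{i=1}^n f(v_{-i}) = v_2 for all sorted profiles v_1 ≥ v_2 ≥ ... ≥ v_n ≥ 0, where v_{-i} is the sorted vector of the other agents' valuations. -/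
/-- Green–Laffont style impossibility for Groves redistribution:
in the single-object setting with `n ≥ 2` agents there is no anonymous deterministic
DSIC redistribution mechanism that is strictly budget balanced: there is no function
`f : ℝ^(n-1) → ℝ` such that for every sorted nonnegative profile
`v 1 ≥ v 2 ≥ … ≥ v n ≥ 0` we have `∑ i, f (v_{-i}) = v 2`, where `v_{-i}` is the
sorted vector of the other agents' valuations (its `j`-th entry is `v j` for `j < i`
and `v (j+1)` for `j ≥ i`). -/
theorem no_strict_budget_balance
    (n : ℕ) (hn : 2 ≤ n) :
    ¬ ∃ f : (Fin (n - 1) → ℝ) → ℝ,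
      ∀ v : ℕ → ℝ,
        (∀ i, 1 ≤ i → i < n → v (i + 1) ≤ v i) → v n ≥ 0 →
        ∑ i ∈ Finset.Icc 1 n,
            f (fun j : Fin (n - 1) =>
                if (j : ℕ) + 1 < i then v ((j : ℕ) + 1) else v ((j : ℕ) + 2))
          = v 2 := by
  rintro ⟨f, hf⟩
  -- x m = f applied to the vector with m leading ones
  set x : ℕ → ℝ := fun m => f (fun j => if (j : ℕ) + 1 ≤ m then 1 else 0) with hxdef
  have hxm : ∀ m, x m = f (fun j => if (j : ℕ) + 1 ≤ m then 1 else 0) := fun m => rfl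
  have key : ∀ k, k ≤ n →
      (k : ℝ) * x (k - 1) + ((n - k : ℕ) : ℝ) * x k = if 2 ≤ k then 1 else 0 := by
    intro k hk
    have h := hf (fun m => if m ≤ k then (1:ℝ) else 0) ?_ ?_
    · have hterm : ∀ i ∈ Finset.Icc 1 n,
          f (fun j : Fin (n-1) =>
              if (j:ℕ)+1 < i then (if (j:ℕ)+1 ≤ k then (1:ℝ) else 0)
              else (if (j:ℕ)+2 ≤ k then (1:ℝ) else 0))
            = if i ≤ k then x (k-1) else x k := by
        intro i hi
        simp only [Finset.mem_Icc] at hi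
        by_cases hik : i ≤ k
        · rw [if_pos hik, hxm]
          congr 1
          funext j
          split_ifs <;> first | rfl | (exfalso; omega)
        · rw [if_neg hik, hxm]
          congr 1
          funext j
          split_ifs <;> first | rfl | (exfalso; omega)
      rw [Finset.sum_congr rfl hterm] at h
      rw [Finset.sum_ite] at h
      have h1 : (Finset.Icc 1 n).filter (fun i => i ≤ k) = Finset.Icc 1 k := by
        ext i; simp only [Finset.mem_filter, Finset.mem_Icc]; omega
      have h2 : (Finset.Icc 1 n).filter (fun i => ¬ i ≤ k) = Finset.Icc (k+1) n := by
        ext i; simp only [Finset.mem_filter, Finset.mem_Icc]; omega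
      rw [h1, h2, Finset.sum_const, Finset.sum_const, Nat.card_Icc, Nat.card_Icc,
        Nat.add_sub_cancel, Nat.succ_sub_succ] at h
      simpa [nsmul_eq_mul] using h
    · intro i hi1 hi2
      split_ifs <;> norm_num <;> omega
    · split_ifs <;> norm_num
  -- alternating binomial combination
  have h0 : ∑ k ∈ Finset.range (n+1),
        (-1:ℝ)^k * (n.choose k) * ((k : ℝ) * x (k - 1) + ((n - k : ℕ) : ℝ) * x k)
      = ∑ k ∈ Finset.range (n+1),
        (-1:ℝ)^k * (n.choose k) * (if 2 ≤ k then (1:ℝ) else 0) := by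
    refine Finset.sum_congr rfl fun k hk => ?_
    rw [key k (Nat.lt_succ_iff.mp (Finset.mem_range.mp hk))]
  have hL : ∑ k ∈ Finset.range (n+1),
        (-1:ℝ)^k * (n.choose k) * ((k : ℝ) * x (k - 1) + ((n - k : ℕ) : ℝ) * x k) = 0 := by
    have expand : ∀ k ∈ Finset.range (n+1),
        (-1:ℝ)^k * (n.choose k) * ((k : ℝ) * x (k - 1) + ((n - k : ℕ) : ℝ) * x k)
        = ((-1:ℝ)^k * (n.choose k) * (k:ℝ) * x (k - 1))
          + ((-1:ℝ)^k * (n.choose k) * ((n - k : ℕ) : ℝ) * x k) := by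
      intro k _; ring
    rw [Finset.sum_congr rfl expand, Finset.sum_add_distrib,
      Finset.sum_range_succ' (fun k => (-1:ℝ)^k * (n.choose k) * (k:ℝ) * x (k-1)) n,
      Finset.sum_range_succ (fun k => (-1:ℝ)^k * (n.choose k) * ((n-k:ℕ):ℝ) * x k) n]
    have hneg : ∀ k ∈ Finset.range n,
        (-1:ℝ)^(k+1) * (n.choose (k+1)) * ((k+1:ℕ):ℝ) * x ((k+1)-1)
        = -((-1:ℝ)^k * (n.choose k) * ((n-k:ℕ):ℝ) * x k) := by
      intro k hk
      have hc : (n.choose (k+1) * (k+1) : ℕ) = n.choose k * (n - k) :=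
        Nat.choose_succ_right_eq n k
      have hc' : ((n.choose (k+1) : ℝ)) * ((k+1:ℕ):ℝ) = (n.choose k : ℝ) * ((n-k:ℕ):ℝ) := by
        exact_mod_cast congrArg (Nat.cast : ℕ → ℝ) hc
      have : ((k+1)-1 : ℕ) = k := by omega
      rw [this, pow_succ]
      linear_combination (-(-1:ℝ)^k * x k) * hc'
    rw [Finset.sum_congr rfl hneg, Finset.sum_neg_distrib]
    simp
  have hR : ∑ k ∈ Finset.range (n+1),
      (-1:ℝ)^k * (n.choose k) * (if 2 ≤ k then (1:ℝ) else 0) = (n:ℝ) - 1 := by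
    have halt : ∑ k ∈ Finset.range (n+1), (-1:ℝ)^k * (n.choose k) = 0 := by
      have h := Int.alternating_sum_range_choose (n := n)
      rw [if_neg (by omega)] at h
      have h2 := congrArg (fun z : ℤ => (z : ℝ)) h
      push_cast at h2
      simpa using h2
    have split1 : (∑ k ∈ Finset.range 2, (-1:ℝ)^k * (n.choose k))
        + ∑ k ∈ Finset.Ico 2 (n+1), (-1:ℝ)^k * (n.choose k)
        = ∑ k ∈ Finset.range (n+1), (-1:ℝ)^k * (n.choose k) := by
      simp only [Finset.range_eq_Ico]
      exact Finset.sum_Ico_consecutive _ (by omega) (by omega)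
    have split2 : (∑ k ∈ Finset.range 2,
          (-1:ℝ)^k * (n.choose k) * (if 2 ≤ k then (1:ℝ) else 0))
        + ∑ k ∈ Finset.Ico 2 (n+1),
          (-1:ℝ)^k * (n.choose k) * (if 2 ≤ k then (1:ℝ) else 0)
        = ∑ k ∈ Finset.range (n+1),
          (-1:ℝ)^k * (n.choose k) * (if 2 ≤ k then (1:ℝ) else 0) := by
      simp only [Finset.range_eq_Ico]
      exact Finset.sum_Ico_consecutive _ (by omega) (by omega)
    have e1 : ∑ k ∈ Finset.range 2, (-1:ℝ)^k * (n.choose k) = 1 - n := by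
      norm_num [Finset.sum_range_succ]
      ring
    have e2 : ∑ k ∈ Finset.range 2,
        (-1:ℝ)^k * (n.choose k) * (if 2 ≤ k then (1:ℝ) else 0) = 0 := by
      norm_num [Finset.sum_range_succ]
    have e3 : ∑ k ∈ Finset.Ico 2 (n+1),
        (-1:ℝ)^k * (n.choose k) * (if 2 ≤ k then (1:ℝ) else 0)
        = ∑ k ∈ Finset.Ico 2 (n+1), (-1:ℝ)^k * (n.choose k) := by
      refine Finset.sum_congr rfl fun k hk => ?_
      rw [if_pos (Finset.mem_Ico.mp hk).1, mul_one]
    rw [← split2, e2, e3, zero_add]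
    rw [← split1, e1] at halt
    linarith
  rw [h0, hR] at hL
  have : (2:ℝ) ≤ (n:ℝ) := by exact_mod_cast hn
  linarith
end

section
/- In the single-object setting with 2 agents, every feasible, individually rational, anonymous, deterministic DSIC redistribution mechanism has redistribution index 0: if f: ℝ≥0 → ℝ satisfies f(v_2) + f(v_1) ≤ v_2 (feasibility) and f(x) ≥ 0 for all x (IR) for all v_1 ≥ v_2 ≥ 0, then inf over profiles with v_2 > 0 of (f(v_1)+f(v_2))/v_2 = 0. -/
/-- In the single-object setting with 2 agents, every feasible,
individually rational, anonymous deterministic DSIC redistribution mechanism has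
redistribution index 0: if `f` (the rebate as a function of the other agent's
valuation) satisfies feasibility `f v₁ + f v₂ ≤ v₂` for all `v₁ ≥ v₂ ≥ 0` and
IR `f x ≥ 0` for all `x ≥ 0`, then the infimum over profiles with `v₂ > 0` of
`(f v₁ + f v₂) / v₂` equals 0. -/
theorem two_agent_zero_index
    (f : ℝ → ℝ)
    (hfeas : ∀ v₁ v₂ : ℝ, v₂ ≤ v₁ → 0 ≤ v₂ → f v₁ + f v₂ ≤ v₂)
    (hIR : ∀ x : ℝ, 0 ≤ x → 0 ≤ f x) :
    sInf { x : ℝ | ∃ v₁ v₂ : ℝ, v₂ ≤ v₁ ∧ 0 < v₂ ∧ x = (f v₁ + f v₂) / v₂ } = 0 := by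
  have hzero : ∀ v : ℝ, 0 < v → f v = 0 := by
    intro v hv
    by_contra h
    have hpos : 0 < f v := lt_of_le_of_ne (hIR v hv.le) (Ne.symm h)
    set w := min v (f v / 2) with hw
    have hw0 : 0 < w := lt_min hv (by linarith)
    have hwv : w ≤ v := min_le_left _ _
    have h1 : f v + f w ≤ w := hfeas v w hwv hw0.le
    have h2 : 0 ≤ f w := hIR w hw0.le
    have h3 : w ≤ f v / 2 := min_le_right _ _
    linarith
  have hset : { x : ℝ | ∃ v₁ v₂ : ℝ, v₂ ≤ v₁ ∧ 0 < v₂ ∧ x = (f v₁ + f v₂) / v₂ } = {0} := by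
    ext x
    simp only [Set.mem_setOf_eq, Set.mem_singleton_iff]
    constructor
    · rintro ⟨v₁, v₂, h12, h2, rfl⟩
      rw [hzero v₁ (lt_of_lt_of_le h2 h12), hzero v₂ h2]
      simp
    · rintro rfl
      exact ⟨1, 1, le_refl 1, one_pos, by rw [hzero 1 one_pos]; simp⟩
  rw [hset, csInf_singleton]
end
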